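/- Let g : ℕ → [0,1] satisfy g(0) = 1 − λ and g(r) ≤ 1 − λ′ for all r ≥ 1, where λ, λ′ ∈ (0,1], and suppose (1−λ′) · ρ(A)² < 1 and 1 − λ′ < 1. With α_j = ∏_{l=1}^{j} g(l−1), β_j = α_j (1 − g(j)), c(q) = Tr(f^{q+1}(P̄₀)), and ν(i) = c(i) + ∑_{j=1}^∞ α_j c(i+j), the double series ∑_{i=1}^∞ β_i ν(i) converges (is finite). (Finiteness of the quantity D in the proof of Theorem 1, which establishes boundedness of expected first passage costs and hence existence of a stabilizing stationary deterministic optimal policy.) -/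

import Mathlib

/-!
By Gelfand's formula `‖Aⁿ‖ = O(sⁿ)` for every `s > ρ(A)`, so the closed form
`fⁿ(P̄₀) = Aⁿ P̄₀ Aⁿᵀ + ∑_{k<n} Aᵏ Q Aᵏᵀ` and `Tr(M X Mᵀ) ≤ ‖M‖² Tr X` (Frobenius norm, `X ⪰ 0`)
give `c(n) = O(rⁿ)` for every `r > max(ρ(A)², 1)`. Since `g(l) ≤ 1 - λ'` for `l ≥ 1`, the weights
satisfy `α_{j+1}, β_{j+1} ≤ (1 - λ')ʲ`, and `r` can be taken with `(1 - λ') r < 1`; the `i`-th summand is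
then dominated by a multiple of `((1 - λ') r)ⁱ`.
-/

open Matrix

/-- The Riccati-type operator `f(X) = A X Aᵀ + Q`. -/
def fop {n : ℕ} (A Q : Matrix (Fin n) (Fin n) ℝ) (X : Matrix (Fin n) (Fin n) ℝ) :
    Matrix (Fin n) (Fin n) ℝ :=
  A * X * Aᵀ + Q

/-- The spectral radius of a real square matrix: the maximum modulus of its
(complex) eigenvalues. -/
noncomputable def rho {n : ℕ} (A : Matrix (Fin n) (Fin n) ℝ) : ℝ :=
  sSup ((fun z : ℂ => ‖z‖) '' spectrum ℂ (A.map Complex.ofReal))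

open Filter Topology

section Frobenius

attribute [local instance] Matrix.frobeniusNormedAddCommGroup Matrix.frobeniusNormedRing
  Matrix.frobeniusNormedAlgebra

variable {ι : Type*} [Fintype ι] {d : ℕ}

lemma Matrix.PosSemidef.exists_mul_self_eq [DecidableEq ι] {X : Matrix ι ι ℝ} (hX : X.PosSemidef) :
    ∃ S : Matrix ι ι ℝ, Sᵀ = S ∧ S * S = X := by
  open scoped MatrixOrder in
  have hX0 : 0 ≤ X := Matrix.nonneg_iff_posSemidef.mpr hX
  refine ⟨CFC.sqrt X, ?_, CFC.sqrt_mul_sqrt_self X hX0⟩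
  rw [← conjTranspose_eq_transpose_of_trivial]
  exact (Matrix.nonneg_iff_posSemidef.mp (CFC.sqrt_nonneg X)).1

lemma Matrix.trace_mul_transpose_self (N : Matrix ι ι ℝ) :
    (N * Nᵀ).trace = ‖N‖ ^ 2 := by
  have hsum : (N * Nᵀ).trace = ∑ i, ∑ j, ‖N i j‖ ^ (2 : ℝ) := by
    simp [Matrix.trace, Matrix.mul_apply, sq]
  rw [hsum, frobenius_norm_def, ← Real.rpow_natCast, ← Real.rpow_mul (by positivity)]
  norm_num

lemma Matrix.trace_mul_mul_transpose_le [DecidableEq ι] (M : Matrix ι ι ℝ) {X : Matrix ι ι ℝ}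
    (hX : X.PosSemidef) : (M * X * Mᵀ).trace ≤ ‖M‖ ^ 2 * X.trace := by
  obtain ⟨S, hSt, rfl⟩ := hX.exists_mul_self_eq
  have hconj : M * (S * S) * Mᵀ = (M * S) * (M * S)ᵀ := by
    rw [transpose_mul, hSt]; noncomm_ring
  have hS : (S * S).trace = ‖S‖ ^ 2 := by rw [← trace_mul_transpose_self, hSt]
  rw [hconj, trace_mul_transpose_self, hS, ← mul_pow]
  exact pow_le_pow_left₀ (norm_nonneg _) (frobenius_norm_mul M S) 2

lemma rho_nonneg (A : Matrix (Fin d) (Fin d) ℝ) : 0 ≤ rho A :=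
  Real.sSup_nonneg (by rintro x ⟨z, -, rfl⟩; exact norm_nonneg z)

lemma spectralRadius_map_ofReal_le_rho (A : Matrix (Fin d) (Fin d) ℝ) :
    spectralRadius ℂ (A.map Complex.ofReal) ≤ ENNReal.ofReal (rho A) := by
  refine iSup₂_le fun z hz => ?_
  have hfin : ((fun z : ℂ => ‖z‖) '' spectrum ℂ (A.map Complex.ofReal)).Finite :=
    (Matrix.finite_spectrum _).image _
  rw [← ENNReal.ofReal_coe_nnreal, coe_nnnorm]
  exact ENNReal.ofReal_le_ofReal (le_csSup hfin.bddAbove ⟨z, hz, rfl⟩)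

lemma exists_norm_pow_le_of_rho_lt (A : Matrix (Fin d) (Fin d) ℝ) {s : ℝ} (hs : rho A < s) :
    ∃ C, ∀ n : ℕ, ‖A ^ n‖ ≤ C * s ^ n := by
  have hs0 : 0 < s := (rho_nonneg A).trans_lt hs
  have hnorm : ∀ n : ℕ, ‖A.map Complex.ofReal ^ n‖ = ‖A ^ n‖ := fun n => by
    have hpow : A.map Complex.ofReal ^ n = (A ^ n).map Complex.ofReal :=
      (map_pow (Complex.ofRealHom.mapMatrix (m := Fin d)) A n).symm
    rw [hpow]
    exact frobenius_norm_map_eq _ _ Complex.norm_real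
  have hlt : spectralRadius ℂ (A.map Complex.ofReal) < ENNReal.ofReal s :=
    (spectralRadius_map_ofReal_le_rho A).trans_lt ((ENNReal.ofReal_lt_ofReal_iff hs0).mpr hs)
  have hev : ∀ᶠ n : ℕ in atTop, ‖A ^ n‖ ≤ s ^ n := by
    filter_upwards [(spectrum.pow_norm_pow_one_div_tendsto_nhds_spectralRadius _).eventually_lt_const
      hlt, eventually_gt_atTop 0] with n hn hn0
    rw [ENNReal.ofReal_lt_ofReal_iff hs0, hnorm, one_div,
      Real.rpow_inv_lt_iff_of_pos (norm_nonneg _) hs0.le (by positivity), Real.rpow_natCast] at hn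
    exact hn.le
  have hO : (fun n : ℕ => A ^ n) =O[atTop] (fun n : ℕ => s ^ n) :=
    Asymptotics.IsBigO.of_bound' (by simpa [abs_of_pos hs0] using hev)
  obtain ⟨C, -, hC⟩ := Asymptotics.bound_of_isBigO_nat_atTop hO
  refine ⟨C, fun n => ?_⟩
  simpa [abs_of_pos hs0] using hC (pow_ne_zero n hs0.ne')

variable {A Q P0 : Matrix (Fin d) (Fin d) ℝ}

lemma fop_iterate (A Q P0 : Matrix (Fin d) (Fin d) ℝ) (n : ℕ) :
    (fop A Q)^[n] P0 = A ^ n * P0 * (A ^ n)ᵀ + ∑ k ∈ Finset.range n, A ^ k * Q * (A ^ k)ᵀ := by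
  induction n generalizing P0 with
  | zero => simp
  | succ n ih =>
    rw [Function.iterate_succ_apply, ih, Finset.sum_range_succ]
    simp only [fop, pow_succ, transpose_mul, Matrix.mul_add, Matrix.add_mul, Matrix.mul_assoc]
    abel

lemma posSemidef_fop_iterate (hQ : Q.PosSemidef) (hP0 : P0.PosSemidef) (n : ℕ) :
    ((fop A Q)^[n] P0).PosSemidef := by
  induction n with
  | zero => exact hP0
  | succ n ih =>
    rw [Function.iterate_succ_apply']
    simpa only [fop, conjTranspose_eq_transpose_of_trivial] using
      (ih.mul_mul_conjTranspose_same A).add hQ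

lemma trace_fop_iterate_le (hQ : Q.PosSemidef) (hP0 : P0.PosSemidef) {C r : ℝ} (hC : 0 ≤ C)
    (hr : 1 < r) (hA : ∀ k : ℕ, ‖A ^ k‖ ^ 2 ≤ C * r ^ k) (n : ℕ) :
    ((fop A Q)^[n] P0).trace ≤ C * (P0.trace + Q.trace / (r - 1)) * r ^ n := by
  have hconj : ∀ {X : Matrix (Fin d) (Fin d) ℝ}, X.PosSemidef → ∀ k : ℕ,
      (A ^ k * X * (A ^ k)ᵀ).trace ≤ C * r ^ k * X.trace := fun hX k =>
    (trace_mul_mul_transpose_le _ hX).trans (mul_le_mul_of_nonneg_right (hA k) hX.trace_nonneg)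
  have hgeom : ∑ k ∈ Finset.range n, r ^ k ≤ r ^ n / (r - 1) := by
    rw [geom_sum_eq hr.ne']
    exact div_le_div_of_nonneg_right (by linarith) (by linarith)
  rw [fop_iterate, trace_add, trace_sum]
  calc _ ≤ C * r ^ n * P0.trace + ∑ k ∈ Finset.range n, C * r ^ k * Q.trace :=
        add_le_add (hconj hP0 n) (Finset.sum_le_sum fun k _ => hconj hQ k)
    _ = C * r ^ n * P0.trace + C * Q.trace * ∑ k ∈ Finset.range n, r ^ k := by
        rw [Finset.mul_sum]
        exact congrArg _ (Finset.sum_congr rfl fun k _ => by ring)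
    _ ≤ C * r ^ n * P0.trace + C * Q.trace * (r ^ n / (r - 1)) := by
        gcongr
        exact mul_nonneg hC hQ.trace_nonneg
    _ = C * (P0.trace + Q.trace / (r - 1)) * r ^ n := by ring

lemma exists_trace_fop_iterate_le (hQ : Q.PosSemidef) (hP0 : P0.PosSemidef) {r : ℝ}
    (hr1 : 1 < r) (hr : rho A ^ 2 < r) : ∃ K, ∀ n : ℕ, ((fop A Q)^[n] P0).trace ≤ K * r ^ n := by
  obtain ⟨C, hC⟩ := exists_norm_pow_le_of_rho_lt A ((Real.lt_sqrt (rho_nonneg A)).mpr hr)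
  refine ⟨_, trace_fop_iterate_le hQ hP0 (sq_nonneg C) hr1 fun k => ?_⟩
  calc ‖A ^ k‖ ^ 2 ≤ (C * √r ^ k) ^ 2 := pow_le_pow_left₀ (norm_nonneg _) (hC k) 2
    _ = C ^ 2 * r ^ k := by rw [mul_pow, ← pow_mul, mul_comm k, pow_mul, Real.sq_sqrt (by linarith)]

end Frobenius

lemma exists_gt_and_mul_lt_one {q m : ℝ} (hq : 0 ≤ q) (h : q * m < 1) :
    ∃ r, m < r ∧ q * r < 1 := by
  rcases hq.eq_or_lt with rfl | hq
  · exact ⟨m + 1, by linarith, by simp⟩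
  · obtain ⟨r, hmr, hr⟩ := exists_between ((lt_div_iff₀' hq).mpr h)
    exact ⟨r, hmr, (lt_div_iff₀' hq).mp hr⟩

lemma prod_range_succ_le_pow {g : ℕ → ℝ} {q : ℝ} (hg : ∀ l, g l ∈ Set.Icc (0 : ℝ) 1)
    (hgq : ∀ l, 1 ≤ l → g l ≤ q) (j : ℕ) : ∏ l ∈ Finset.range (j + 1), g l ≤ q ^ j := by
  have htail : ∏ l ∈ Finset.range j, g (l + 1) ≤ q ^ j :=
    calc ∏ l ∈ Finset.range j, g (l + 1) ≤ ∏ _l ∈ Finset.range j, q :=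
          Finset.prod_le_prod (fun l _ => (hg _).1) (fun l _ => hgq _ (by omega))
      _ = q ^ j := by rw [Finset.prod_const, Finset.card_range]
  rw [Finset.prod_range_succ']
  exact (mul_le_of_le_one_right (Finset.prod_nonneg fun l _ => (hg _).1) (hg 0).2).trans htail

section GeometricMajorant

variable {a b c : ℕ → ℝ} {q r K : ℝ}

lemma mul_shift_le_geometric (ha : ∀ j, a j ≤ q ^ j) (hc0 : ∀ n, 0 ≤ c n)
    (hc : ∀ n, c n ≤ K * r ^ n) (hq : 0 ≤ q) (m j : ℕ) :
    a j * c (j + m) ≤ K * r ^ m * (q * r) ^ j :=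
  calc a j * c (j + m) ≤ q ^ j * (K * r ^ (j + m)) :=
        mul_le_mul (ha j) (hc _) (hc0 _) (pow_nonneg hq j)
    _ = K * r ^ m * (q * r) ^ j := by ring

lemma tsum_mul_shift_le (ha0 : ∀ j, 0 ≤ a j) (ha : ∀ j, a j ≤ q ^ j) (hc0 : ∀ n, 0 ≤ c n)
    (hc : ∀ n, c n ≤ K * r ^ n) (hq : 0 ≤ q) (hr : 0 ≤ r) (hqr : q * r < 1) (m : ℕ) :
    ∑' j, a j * c (j + m) ≤ K * r ^ m * (1 - q * r)⁻¹ := by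
  have hgeom := (summable_geometric_of_lt_one (mul_nonneg hq hr) hqr).mul_left (K * r ^ m)
  have hle := mul_shift_le_geometric ha hc0 hc hq m
  calc ∑' j, a j * c (j + m) ≤ ∑' j, K * r ^ m * (q * r) ^ j :=
        (hgeom.of_nonneg_of_le (fun j => mul_nonneg (ha0 j) (hc0 _)) hle).tsum_le_tsum hle hgeom
    _ = K * r ^ m * (1 - q * r)⁻¹ := by
        rw [tsum_mul_left, tsum_geometric_of_lt_one (mul_nonneg hq hr) hqr]

lemma summable_mul_add_tsum (ha0 : ∀ j, 0 ≤ a j) (ha : ∀ j, a j ≤ q ^ j) (hb0 : ∀ i, 0 ≤ b i)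
    (hb : ∀ i, b i ≤ q ^ i) (hc0 : ∀ n, 0 ≤ c n) (hc : ∀ n, c n ≤ K * r ^ n) (hq : 0 ≤ q)
    (hr : 0 ≤ r) (hqr : q * r < 1) (k l : ℕ) :
    Summable fun i => b i * (c (i + k) + ∑' j, a j * c (i + j + l)) := by
  have hshift : ∀ i, ∑' j, a j * c (i + j + l) = ∑' j, a j * c (j + (i + l)) := fun i =>
    tsum_congr fun j => by rw [show i + j + l = j + (i + l) by omega]
  refine Summable.of_nonneg_of_le (fun i => ?_) (fun i => ?_)
    ((summable_geometric_of_lt_one (mul_nonneg hq hr) hqr).mul_left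
      (K * r ^ k + K * r ^ l * (1 - q * r)⁻¹))
  · exact mul_nonneg (hb0 i) (add_nonneg (hc0 _) (tsum_nonneg fun j => mul_nonneg (ha0 j) (hc0 _)))
  · rw [hshift]
    calc b i * (c (i + k) + ∑' j, a j * c (j + (i + l)))
        ≤ q ^ i * (K * r ^ (i + k) + K * r ^ (i + l) * (1 - q * r)⁻¹) :=
          mul_le_mul (hb i) (add_le_add (hc _) (tsum_mul_shift_le ha0 ha hc0 hc hq hr hqr _))
            (add_nonneg (hc0 _) (tsum_nonneg fun j => mul_nonneg (ha0 j) (hc0 _)))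
            (pow_nonneg hq i)
      _ = (K * r ^ k + K * r ^ l * (1 - q * r)⁻¹) * (q * r) ^ i := by ring

end GeometricMajorant

/-- The series are reindexed: the summand at `i` is `β_{i+1} ν(i+1)`, and inside `ν`, the summand
at `j` is `α_{j+1} c(i+1+j+1)`. -/
theorem D_summable_general {d : ℕ} (A Q P0 : Matrix (Fin d) (Fin d) ℝ)
    (hQ : Q.PosSemidef) (hP0 : P0.PosSemidef)
    (g : ℕ → ℝ) (lam' : ℝ)
    (hg : ∀ r : ℕ, g r ∈ Set.Icc (0 : ℝ) 1)
    (hgr : ∀ r : ℕ, 1 ≤ r → g r ≤ 1 - lam')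
    (hstab : (1 - lam') * (rho A) ^ 2 < 1) (hlt : 1 - lam' < 1) :
    Summable (fun i : ℕ =>
      ((∏ l ∈ Finset.range (i + 1), g l) * (1 - g (i + 1))) *
        (((fop A Q)^[i + 2] P0).trace +
          ∑' j : ℕ, (∏ l ∈ Finset.range (j + 1), g l) * ((fop A Q)^[i + j + 3] P0).trace)) := by
  have hq : 0 ≤ 1 - lam' := (hg 1).1.trans (hgr 1 le_rfl)
  obtain ⟨r, hr, hqr⟩ := exists_gt_and_mul_lt_one hq (m := max (rho A ^ 2) 1)
    (by rw [mul_max_of_nonneg _ _ hq]; exact max_lt hstab (by simpa using hlt))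
  obtain ⟨K, hK⟩ := exists_trace_fop_iterate_le (A := A) hQ hP0
    ((le_max_right _ _).trans_lt hr) ((le_max_left _ _).trans_lt hr)
  have hα0 : ∀ j, 0 ≤ ∏ l ∈ Finset.range (j + 1), g l :=
    fun j => Finset.prod_nonneg fun l _ => (hg l).1
  have hα := prod_range_succ_le_pow hg hgr
  exact summable_mul_add_tsum hα0 hα
    (fun i => mul_nonneg (hα0 i) (sub_nonneg.mpr (hg _).2))
    (fun i => (mul_le_of_le_one_right (hα0 i) (by linarith [(hg (i + 1)).1])).trans (hα i))
    (fun n => (posSemidef_fop_iterate hQ hP0 n).trace_nonneg) hK hq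
    (by linarith [le_max_right (rho A ^ 2) 1]) hqr 2 3

/-- Finiteness of the quantity `D = ∑_{i=1}^∞ β_i ν(i)` in the proof of Theorem 1, where
`α_j = ∏_{l=1}^{j} g(l−1)`, `β_j = α_j (1 − g(j))`, `c(q) = Tr(f^{q+1}(P̄₀))` and
`ν(i) = c(i) + ∑_{j=1}^∞ α_j c(i+j)`.  (The series are reindexed: the summand at `i` is
`β_{i+1} ν(i+1)`, and inside `ν`, the summand at `j` is `α_{j+1} c(i+1+j+1)`.) -/
theorem D_summable {d : ℕ} (A Q P0 : Matrix (Fin d) (Fin d) ℝ)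
    (hQ : Q.PosSemidef) (hP0 : P0.PosSemidef)
    (g : ℕ → ℝ) (lam lam' : ℝ)
    (hlam : lam ∈ Set.Ioc (0 : ℝ) 1) (hlam' : lam' ∈ Set.Ioc (0 : ℝ) 1)
    (hg : ∀ r : ℕ, g r ∈ Set.Icc (0 : ℝ) 1)
    (hg0 : g 0 = 1 - lam) (hgr : ∀ r : ℕ, 1 ≤ r → g r ≤ 1 - lam')
    (hstab : (1 - lam') * (rho A) ^ 2 < 1) (hlt : 1 - lam' < 1) :
    Summable (fun i : ℕ =>
      ((∏ l ∈ Finset.range (i + 1), g l) * (1 - g (i + 1))) *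
        (((fop A Q)^[i + 2] P0).trace +
          ∑' j : ℕ, (∏ l ∈ Finset.range (j + 1), g l) * ((fop A Q)^[i + j + 3] P0).trace)) :=
  D_summable_general A Q P0 hQ hP0 g lam' hg hgr hstab hlt
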